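/- Chen's multiplicative identity (termwise): let Γ₁, Γ₂ : [0,1] → ℝ^N be Lipschitz paths and let I = (i₁, …, i_k) be a multi-index with entries in {1, …, N}. Then S^I(Γ₁ * Γ₂) = Σ_{j=0}^{k} S^{(i₁, …, i_j)}(Γ₁) · S^{(i_{j+1}, …, i_k)}(Γ₂), where by convention the iterated integral over the empty multi-index equals 1, and Γ₁ * Γ₂ denotes concatenation of paths. -/

import Mathlib

/-!
Cut `Δ^k` according to how many of the times `t₁ ≤ ⋯ ≤ t_k` fall before `1/2`. On the piece
where exactly the first `j` do, the coordinates split as `(u, v) ∈ ℝ^j × ℝ^(k-j)` and the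
integrand of `S^I(Γ₁ * Γ₂)` factors. The substitutions `s = 2u` and `s = 2v - 1`, whose
Jacobians absorb the factor `2` in every derivative of the concatenation, turn the two blocks
into `Δ^j` and `Δ^(k-j)` up to null sets, so this piece contributes
`S^{(i₁,…,i_j)}(Γ₁) · S^{(i_{j+1},…,i_k)}(Γ₂)`. The Lipschitz bounds make the integrand bounded,
hence integrable on `Δ^k`, so that its integral is the sum over the pieces.
-/

open MeasureTheory

noncomputable section

def simplexSet (k : ℕ) : Set (Fin k → ℝ) :=
  {t | (∀ i j : Fin k, i ≤ j → t i ≤ t j) ∧ ∀ i, 0 ≤ t i ∧ t i ≤ 1}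

/-- `S^I(Γ)`. For `k = 0` it is `1`, the volume of the one-point space `Fin 0 → ℝ`. -/
def sig {N : ℕ} (Γ : ℝ → EuclideanSpace ℝ (Fin N)) {k : ℕ} (I : Fin k → Fin N) : ℝ :=
  ∫ t in simplexSet k, ∏ m : Fin k, deriv (fun s => Γ s (I m)) (t m)

def concat {N : ℕ} (Γ₁ Γ₂ : ℝ → EuclideanSpace ℝ (Fin N)) :
    ℝ → EuclideanSpace ℝ (Fin N) :=
  fun t => if t < 1/2 then Γ₁ (2 * t) else Γ₁ 1 - Γ₂ 0 + Γ₂ (2 * t - 1)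

open Set Filter

def orderedTuples (k : ℕ) (S : Set ℝ) : Set (Fin k → ℝ) :=
  {t | Monotone t} ∩ univ.pi fun _ => S

theorem simplexSet_eq_orderedTuples (k : ℕ) : simplexSet k = orderedTuples k (Icc 0 1) := by
  ext t
  simp [simplexSet, orderedTuples, Monotone, Pi.le_def, forall_and]

theorem measurableSet_orderedTuples (k : ℕ) {S : Set ℝ} (hS : MeasurableSet S) :
    MeasurableSet (orderedTuples k S) :=
  isClosed_monotone.measurableSet.inter (.univ_pi fun _ => hS)

theorem measurableSet_simplexSet (k : ℕ) : MeasurableSet (simplexSet k) :=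
  simplexSet_eq_orderedTuples k ▸ measurableSet_orderedTuples k measurableSet_Icc

theorem orderedTuples_ae_eq (k : ℕ) {S T : Set ℝ} (h : S =ᵐ[volume] T) :
    orderedTuples k S =ᵐ[volume] orderedTuples k T :=
  EventuallyEq.rfl.inter (Measure.ae_eq_set_pi fun _ _ => h)

theorem integral_comp_smul_add {E F : Type*} [NormedAddCommGroup E] [NormedSpace ℝ E]
    [MeasurableSpace E] [BorelSpace E] [FiniteDimensional ℝ E] (μ : Measure E)
    [μ.IsAddHaarMeasure] [NormedAddCommGroup F] [NormedSpace ℝ F] (f : E → F) {c : ℝ}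
    (hc : c ≠ 0) (a : E) :
    ∫ x, f (c • x + a) ∂μ = |(c ^ Module.finrank ℝ E)⁻¹| • ∫ x, f x ∂μ := by
  have hshift : ∀ x, c • x + a = c • (x + c⁻¹ • a) := fun x => by
    rw [smul_add, smul_inv_smul₀ hc]
  simp_rw [hshift]
  rw [integral_add_right_eq_self (fun x => f (c • x)), Measure.integral_comp_smul]

theorem setIntegral_orderedTuples_comp_affine (k : ℕ) {S : Set ℝ} (hS : MeasurableSet S)
    (g : Fin k → ℝ → ℝ) {c : ℝ} (hc : 0 < c) (d : ℝ) :
    ∫ u in orderedTuples k ((fun x => c * x + d) ⁻¹' S), ∏ m, c * g m (c * u m + d) =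
      ∫ t in orderedTuples k S, ∏ m, g m (t m) := by
  set Φ : (Fin k → ℝ) → Fin k → ℝ := fun u => c • u + fun _ => d
  have hΦ : Measurable Φ := (measurable_id.const_smul c).add_const _
  have hpre : orderedTuples k ((fun x => c * x + d) ⁻¹' S) = Φ ⁻¹' orderedTuples k S := by
    ext u
    simp [orderedTuples, Φ, Monotone, mul_le_mul_iff_right₀ hc]
  have hprod : ∀ u : Fin k → ℝ, ∏ m, c * g m (c * u m + d) = c ^ k * ∏ m, g m (Φ u m) := by
    intro u
    simp [Finset.prod_mul_distrib, Φ]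
  have hA := measurableSet_orderedTuples k hS
  simp_rw [hprod, integral_const_mul, hpre]
  rw [← integral_indicator hA, ← integral_indicator (hA.preimage hΦ)]
  have hcomp : ∀ u, (Φ ⁻¹' orderedTuples k S).indicator (fun u => ∏ m, g m (Φ u m)) u =
      (orderedTuples k S).indicator (fun t => ∏ m, g m (t m)) (Φ u) := fun u =>
    indicator_comp_right (g := fun t => ∏ m, g m (t m)) Φ
  simp_rw [hcomp]
  rw [integral_comp_smul_add _ _ hc.ne', Module.finrank_fin_fun, smul_eq_mul, ← mul_assoc,
    abs_of_pos (by positivity), mul_inv_cancel₀ (by positivity), one_mul]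

theorem Fin.monotone_append {α : Type*} [Preorder α] {p q : ℕ} {u : Fin p → α} {v : Fin q → α}
    (hu : Monotone u) (hv : Monotone v) (huv : ∀ i j, u i ≤ v j) : Monotone (Fin.append u v) := by
  intro a b hab
  induction a using Fin.addCases with
  | left i =>
    induction b using Fin.addCases with
    | left j => simpa using hu ((Fin.strictMono_castAdd q).le_iff_le.1 hab)
    | right j => simpa using huv i j
  | right i =>
    induction b using Fin.addCases with
    | left j => exact absurd hab (by simp [Fin.le_def]; omega)
    | right j => simpa using hv ((Fin.strictMono_natAdd p).le_iff_le.1 hab)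

theorem measurePreserving_finAppend (p q : ℕ) :
    MeasurePreserving (fun x : (Fin p → ℝ) × (Fin q → ℝ) => Fin.append x.1 x.2) := by
  have happend : (fun x : (Fin p → ℝ) × (Fin q → ℝ) => Fin.append x.1 x.2) =
      MeasurableEquiv.piCongrLeft (fun _ => ℝ) finSumFinEquiv ∘
        (MeasurableEquiv.sumPiEquivProdPi fun _ : Fin p ⊕ Fin q => ℝ).symm := by
    funext ⟨u, v⟩ i
    induction i using Fin.addCases with
    | left i =>
      rw [Fin.append_left, ← finSumFinEquiv_apply_left]
      exact (Equiv.piCongrLeft_sumInl (fun _ => ℝ) finSumFinEquiv u v i).symm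
    | right i =>
      rw [Fin.append_right, ← finSumFinEquiv_apply_right]
      exact (Equiv.piCongrLeft_sumInr (fun _ => ℝ) finSumFinEquiv u v i).symm
  rw [happend]
  exact (volume_measurePreserving_piCongrLeft (fun _ => ℝ) finSumFinEquiv).comp
    (volume_measurePreserving_sumPiEquivProdPi_symm fun _ : Fin p ⊕ Fin q => ℝ)

def simplexPiece (k j : ℕ) : Set (Fin k → ℝ) :=
  {t ∈ simplexSet k | ∀ m : Fin k, t m < 1 / 2 ↔ (m : ℕ) < j}

theorem measurableSet_simplexPiece (k j : ℕ) : MeasurableSet (simplexPiece k j) := by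
  refine (measurableSet_simplexSet k).inter ?_
  refine measurableSet_setOfPred.2 (Measurable.forall fun m => .iff ?_ measurable_const)
  exact measurableSet_setOfPred.1 (measurableSet_lt (measurable_pi_apply m) measurable_const)

theorem Monotone.lt_iff_lt_card_filter {α : Type*} [LinearOrder α] {k : ℕ} {t : Fin k → α}
    (ht : Monotone t) (c : α) (m : Fin k) :
    t m < c ↔ (m : ℕ) < (Finset.univ.filter fun i => t i < c).card := by
  constructor
  · intro hm
    have hsub : Finset.Iic m ⊆ Finset.univ.filter fun i => t i < c := fun i hi => by
      simp only [Finset.mem_Iic, Finset.mem_filter, Finset.mem_univ, true_and] at hi ⊢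
      exact (ht hi).trans_lt hm
    have := Finset.card_le_card hsub
    rw [Fin.card_Iic] at this
    omega
  · intro hm
    by_contra hc
    have hsub : (Finset.univ.filter fun i => t i < c) ⊆ Finset.Iio m := fun i hi => by
      simp only [Finset.mem_Iio, Finset.mem_filter, Finset.mem_univ, true_and] at hi ⊢
      exact lt_of_not_ge fun hmi => hc ((ht hmi).trans_lt hi)
    have := Finset.card_le_card hsub
    rw [Fin.card_Iio] at this
    omega

theorem simplexSet_eq_iUnion_simplexPiece (k : ℕ) :
    simplexSet k = ⋃ j : Fin (k + 1), simplexPiece k j := by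
  ext t
  refine ⟨fun ht => ?_, fun ht => (mem_iUnion.1 ht).elim fun _ hj => hj.1⟩
  have hmono : Monotone t := (simplexSet_eq_orderedTuples k ▸ ht).1
  have hcard : (Finset.univ.filter fun i => t i < 1 / 2).card < k + 1 :=
    Nat.lt_succ_of_le ((Finset.card_le_univ _).trans (Fintype.card_fin k).le)
  exact mem_iUnion.2 ⟨⟨_, hcard⟩, ht, hmono.lt_iff_lt_card_filter _⟩

theorem pairwise_disjoint_simplexPiece (k : ℕ) :
    Pairwise (Function.onFun Disjoint fun j : Fin (k + 1) => simplexPiece k j) := by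
  intro j j' hne
  refine Set.disjoint_left.2 fun t ⟨_, ht⟩ ⟨_, ht'⟩ => hne ?_
  have key : ∀ m : Fin k, (m : ℕ) < j ↔ (m : ℕ) < j' := fun m => (ht m).symm.trans (ht' m)
  have hj := j.is_le
  have hj' := j'.is_le
  ext
  by_contra hne'
  rcases Nat.lt_or_gt_of_ne hne' with h | h
  · simpa [h] using key ⟨j, by omega⟩
  · simpa [h] using (key ⟨j', by omega⟩).symm

theorem finAppend_preimage_simplexPiece (p q : ℕ) :
    (fun x : (Fin p → ℝ) × (Fin q → ℝ) => Fin.append x.1 x.2) ⁻¹' simplexPiece (p + q) p =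
      orderedTuples p (Ico 0 (1 / 2)) ×ˢ orderedTuples q (Icc (1 / 2) 1) := by
  ext ⟨u, v⟩
  simp only [mem_preimage, simplexPiece, simplexSet_eq_orderedTuples, orderedTuples,
    mem_ofPred_eq, mem_inter_iff, mem_prod, mem_univ_pi, Fin.forall_fin_add, Fin.append_left,
    Fin.append_right, Fin.val_castAdd, Fin.val_natAdd, Fin.is_lt, iff_true, add_lt_iff_neg_left,
    not_lt_zero, iff_false, not_lt, mem_Icc, mem_Ico]
  constructor
  · rintro ⟨⟨hmono, hu, hv⟩, hu', hv'⟩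
    refine ⟨⟨fun i j hij => ?_, fun i => ⟨(hu i).1, hu' i⟩⟩, fun i j hij => ?_,
      fun j => ⟨hv' j, (hv j).2⟩⟩
    · simpa using hmono ((Fin.strictMono_castAdd q).monotone hij)
    · simpa using hmono ((Fin.strictMono_natAdd p).monotone hij)
  · rintro ⟨⟨humono, hu⟩, hvmono, hv⟩
    refine ⟨⟨Fin.monotone_append humono hvmono fun i j => ((hu i).2.trans_le (hv j).1).le,
      fun i => ⟨(hu i).1, by linarith [(hu i).2]⟩, fun j => ⟨by linarith [(hv j).1], (hv j).2⟩⟩,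
      fun i => (hu i).2, fun j => (hv j).1⟩

theorem setIntegral_simplexPiece_add {p q : ℕ} (F : Fin (p + q) → ℝ → ℝ) :
    ∫ t in simplexPiece (p + q) p, ∏ m, F m (t m) =
      (∫ u in orderedTuples p (Ico 0 (1 / 2)), ∏ m, F (Fin.castAdd q m) (u m)) *
        ∫ v in orderedTuples q (Icc (1 / 2) 1), ∏ m, F (Fin.natAdd p m) (v m) := by
  rw [← (measurePreserving_finAppend p q).setIntegral_preimage_emb
    (Fin.appendHomeomorph p q).measurableEmbedding, finAppend_preimage_simplexPiece,
    Measure.volume_eq_prod, ← setIntegral_prod_mul]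
  simp [Fin.prod_univ_add]

theorem deriv_concat_apply_of_lt {N : ℕ} (Γ₁ Γ₂ : ℝ → EuclideanSpace ℝ (Fin N)) (i : Fin N)
    {t : ℝ} (ht : t < 1 / 2) :
    deriv (fun s => concat Γ₁ Γ₂ s i) t = 2 * deriv (fun s => Γ₁ s i) (2 * t) := by
  have hloc : (fun s => concat Γ₁ Γ₂ s i) =ᶠ[nhds t] fun s => Γ₁ (2 * s) i := by
    filter_upwards [Iio_mem_nhds ht] with s hs
    simp only [concat, if_pos (mem_Iio.1 hs)]
  rw [hloc.deriv_eq]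
  exact deriv_comp_mul_left 2 (fun y => Γ₁ y i) t

theorem deriv_concat_apply_of_gt {N : ℕ} (Γ₁ Γ₂ : ℝ → EuclideanSpace ℝ (Fin N)) (i : Fin N)
    {t : ℝ} (ht : 1 / 2 < t) :
    deriv (fun s => concat Γ₁ Γ₂ s i) t = 2 * deriv (fun s => Γ₂ s i) (2 * t - 1) := by
  have hloc : (fun s => concat Γ₁ Γ₂ s i) =ᶠ[nhds t]
      fun s => (Γ₁ 1 i - Γ₂ 0 i) + Γ₂ (2 * s - 1) i := by
    filter_upwards [Ioi_mem_nhds ht] with s hs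
    simp only [concat, if_neg (not_lt.2 (le_of_lt (mem_Ioi.1 hs))), PiLp.add_apply,
      PiLp.sub_apply]
  rw [hloc.deriv_eq, deriv_const_add]
  exact (deriv_comp_mul_left 2 (fun y => Γ₂ (y - 1) i) t).trans
    (congrArg (2 * ·) (deriv_comp_sub_const (f := fun y => Γ₂ y i) ..))

theorem setIntegral_firstHalf_deriv_concat {N p : ℕ} (Γ₁ Γ₂ : ℝ → EuclideanSpace ℝ (Fin N))
    (J : Fin p → Fin N) :
    ∫ u in orderedTuples p (Ico 0 (1 / 2)), ∏ m, deriv (fun s => concat Γ₁ Γ₂ s (J m)) (u m) =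
      sig Γ₁ J := by
  have hset : Ico (0 : ℝ) (1 / 2) = (fun x => 2 * x + 0) ⁻¹' Ico 0 1 := by
    ext x
    simp only [mem_Ico, mem_preimage, add_zero]
    constructor <;> rintro ⟨h₀, h₁⟩ <;> constructor <;> linarith
  calc _ = ∫ u in orderedTuples p ((fun x => 2 * x + 0) ⁻¹' Ico 0 1),
        ∏ m, 2 * deriv (fun s => Γ₁ s (J m)) (2 * u m + 0) := by
        rw [← hset]
        refine setIntegral_congr_fun (measurableSet_orderedTuples p measurableSet_Ico)
          fun u hu => Finset.prod_congr rfl fun m _ => ?_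
        rw [add_zero]
        exact deriv_concat_apply_of_lt Γ₁ Γ₂ (J m) (hu.2 m trivial).2
    _ = ∫ t in orderedTuples p (Ico 0 1), ∏ m, deriv (fun s => Γ₁ s (J m)) (t m) :=
        setIntegral_orderedTuples_comp_affine p measurableSet_Ico _ two_pos 0
    _ = sig Γ₁ J := by
        rw [sig, simplexSet_eq_orderedTuples]
        exact setIntegral_congr_set (orderedTuples_ae_eq p Ico_ae_eq_Icc)

theorem setIntegral_secondHalf_deriv_concat {N q : ℕ} (Γ₁ Γ₂ : ℝ → EuclideanSpace ℝ (Fin N))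
    (J : Fin q → Fin N) :
    ∫ v in orderedTuples q (Icc (1 / 2) 1), ∏ m, deriv (fun s => concat Γ₁ Γ₂ s (J m)) (v m) =
      sig Γ₂ J := by
  have hset : Ioc (1 / 2 : ℝ) 1 = (fun x => 2 * x + -1) ⁻¹' Ioc 0 1 := by
    ext x
    simp only [mem_Ioc, mem_preimage]
    constructor <;> rintro ⟨h₀, h₁⟩ <;> constructor <;> linarith
  calc _ = ∫ v in orderedTuples q ((fun x => 2 * x + -1) ⁻¹' Ioc 0 1),
        ∏ m, 2 * deriv (fun s => Γ₂ s (J m)) (2 * v m + -1) := by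
        -- `concat` need not be differentiable at `1/2`: drop that face as a null set.
        rw [setIntegral_congr_set (orderedTuples_ae_eq q Ioc_ae_eq_Icc.symm), ← hset]
        refine setIntegral_congr_fun (measurableSet_orderedTuples q measurableSet_Ioc)
          fun v hv => Finset.prod_congr rfl fun m _ => ?_
        rw [← sub_eq_add_neg]
        exact deriv_concat_apply_of_gt Γ₁ Γ₂ (J m) (hv.2 m trivial).1
    _ = ∫ t in orderedTuples q (Ioc 0 1), ∏ m, deriv (fun s => Γ₂ s (J m)) (t m) :=
        setIntegral_orderedTuples_comp_affine q measurableSet_Ioc _ two_pos (-1)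
    _ = sig Γ₂ J := by
        rw [sig, simplexSet_eq_orderedTuples]
        exact setIntegral_congr_set (orderedTuples_ae_eq q Ioc_ae_eq_Icc)

theorem setIntegral_simplexPiece_deriv_concat {N p q k : ℕ}
    (Γ₁ Γ₂ : ℝ → EuclideanSpace ℝ (Fin N)) (h : p + q = k) (I : Fin k → Fin N) :
    ∫ t in simplexPiece k p, ∏ m, deriv (fun s => concat Γ₁ Γ₂ s (I m)) (t m) =
      sig Γ₁ (fun m : Fin p => I ⟨m, by omega⟩) *
        sig Γ₂ (fun m : Fin q => I ⟨p + m, by omega⟩) := by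
  subst h
  rw [setIntegral_simplexPiece_add fun m x => deriv (fun s => concat Γ₁ Γ₂ s (I m)) x]
  exact congrArg₂ (· * ·) (setIntegral_firstHalf_deriv_concat Γ₁ Γ₂ _)
    (setIntegral_secondHalf_deriv_concat Γ₁ Γ₂ _)

theorem ae_forall_apply_notMem (k : ℕ) {s : Set ℝ} (hs : s.Countable) :
    ∀ᵐ t : Fin k → ℝ, ∀ m, t m ∉ s :=
  eventually_all.2 fun m =>
    (Measure.tendsto_eval_ae_ae (μ := fun _ : Fin k => (volume : Measure ℝ)) (i := m)).eventually
      (hs.ae_notMem volume)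

theorem abs_deriv_apply_le_of_lipschitzOnWith {N : ℕ} {Γ : ℝ → EuclideanSpace ℝ (Fin N)}
    {K : NNReal} (h : LipschitzOnWith K Γ (Icc 0 1)) (i : Fin N) {t : ℝ} (ht : t ∈ Ioo 0 1) :
    |deriv (fun s => Γ s i) t| ≤ K := by
  have hi : LipschitzOnWith K (fun s => Γ s i) (Icc 0 1) := by
    simpa [Function.comp_def] using
      ((LipschitzWith.eval i).comp (PiLp.lipschitzWith_ofLp 2 _)).comp_lipschitzOnWith h
  exact norm_deriv_le_of_lipschitzOn (Icc_mem_nhds ht.1 ht.2) hi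

theorem abs_deriv_concat_apply_le {N : ℕ} {Γ₁ Γ₂ : ℝ → EuclideanSpace ℝ (Fin N)} {K₁ K₂ : NNReal}
    (h₁ : LipschitzOnWith K₁ Γ₁ (Icc 0 1)) (h₂ : LipschitzOnWith K₂ Γ₂ (Icc 0 1)) (i : Fin N)
    {t : ℝ} (ht : t ∈ Ioo 0 1) (ht' : t ≠ 1 / 2) :
    |deriv (fun s => concat Γ₁ Γ₂ s i) t| ≤ 2 * max (K₁ : ℝ) K₂ := by
  rcases lt_or_gt_of_ne ht' with hlt | hgt
  · rw [deriv_concat_apply_of_lt Γ₁ Γ₂ i hlt, abs_mul, abs_two]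
    have := abs_deriv_apply_le_of_lipschitzOnWith h₁ i (t := 2 * t)
      ⟨by linarith [ht.1], by linarith⟩
    linarith [le_max_left (K₁ : ℝ) K₂]
  · rw [deriv_concat_apply_of_gt Γ₁ Γ₂ i hgt, abs_mul, abs_two]
    have := abs_deriv_apply_le_of_lipschitzOnWith h₂ i (t := 2 * t - 1)
      ⟨by linarith, by linarith [ht.2]⟩
    linarith [le_max_right (K₁ : ℝ) K₂]

theorem integrableOn_simplexSet_deriv_concat {N k : ℕ} {Γ₁ Γ₂ : ℝ → EuclideanSpace ℝ (Fin N)}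
    {K₁ K₂ : NNReal} (h₁ : LipschitzOnWith K₁ Γ₁ (Icc 0 1))
    (h₂ : LipschitzOnWith K₂ Γ₂ (Icc 0 1)) (I : Fin k → Fin N) :
    IntegrableOn (fun t => ∏ m, deriv (fun s => concat Γ₁ Γ₂ s (I m)) (t m)) (simplexSet k) := by
  have hfin : volume (simplexSet k) ≠ ⊤ := by
    rw [simplexSet_eq_orderedTuples]
    exact ((measure_mono inter_subset_right).trans_lt
      (isCompact_univ_pi fun _ => isCompact_Icc).measure_lt_top).ne
  refine Measure.integrableOn_of_bounded (M := (2 * max (K₁ : ℝ) K₂) ^ k) hfin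
    (Finset.measurable_prod _ fun m _ =>
      (measurable_deriv _).comp (measurable_pi_apply m)).aestronglyMeasurable ?_
  have hnull : ({0, 1 / 2, 1} : Set ℝ).Countable := by simp
  filter_upwards [ae_restrict_mem (measurableSet_simplexSet k), ae_restrict_of_ae (ae_forall_apply_notMem k hnull)]
    with t ht hnot
  rw [Real.norm_eq_abs, Finset.abs_prod]
  calc ∏ m, |deriv (fun s => concat Γ₁ Γ₂ s (I m)) (t m)|
        ≤ ∏ _m : Fin k, 2 * max (K₁ : ℝ) K₂ := by
        refine Finset.prod_le_prod (fun _ _ => abs_nonneg _) fun m _ => ?_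
        have hbd := (simplexSet_eq_orderedTuples k ▸ ht).2 m trivial
        simp only [mem_insert_iff, mem_singleton_iff, not_or] at hnot
        exact abs_deriv_concat_apply_le h₁ h₂ (I m)
          ⟨lt_of_le_of_ne hbd.1 (Ne.symm (hnot m).1), lt_of_le_of_ne hbd.2 (hnot m).2.2⟩
          (hnot m).2.1
    _ = (2 * max (K₁ : ℝ) K₂) ^ k := by simp

/-- **Chen's multiplicative identity, termwise.** For Lipschitz paths
`Γ₁, Γ₂ : [0,1] → ℝ^N` and a multi-index `I = (i₁, …, i_k)`,
`S^I(Γ₁ * Γ₂) = Σ_{j=0}^{k} S^{(i₁, …, i_j)}(Γ₁) · S^{(i_{j+1}, …, i_k)}(Γ₂)`,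
where the iterated integral over the empty multi-index equals `1`. -/
theorem chen_identity_termwise {N k : ℕ} (Γ₁ Γ₂ : ℝ → EuclideanSpace ℝ (Fin N))
    (h₁ : ∃ K : NNReal, LipschitzOnWith K Γ₁ (Set.Icc 0 1))
    (h₂ : ∃ K : NNReal, LipschitzOnWith K Γ₂ (Set.Icc 0 1))
    (I : Fin k → Fin N) :
    sig (concat Γ₁ Γ₂) I =
      ∑ j : Fin (k + 1),
        sig Γ₁ (fun m : Fin j.val => I ⟨m.val, by have := m.isLt; have := j.is_le; omega⟩) *
        sig Γ₂ (fun m : Fin (k - j.val) =>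
          I ⟨j.val + m.val, by have := m.isLt; have := j.is_le; omega⟩) := by
  obtain ⟨K₁, hK₁⟩ := h₁
  obtain ⟨K₂, hK₂⟩ := h₂
  have hint := integrableOn_simplexSet_deriv_concat hK₁ hK₂ I
  rw [simplexSet_eq_iUnion_simplexPiece] at hint
  rw [sig, simplexSet_eq_iUnion_simplexPiece,
    integral_iUnion_fintype (s := fun j : Fin (k + 1) => simplexPiece k j)
      (fun j => measurableSet_simplexPiece k j) (pairwise_disjoint_simplexPiece k)
      fun j => hint.mono_set (subset_iUnion (fun j : Fin (k + 1) => simplexPiece k j) j)]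
  exact Finset.sum_congr rfl fun j _ =>
    setIntegral_simplexPiece_deriv_concat Γ₁ Γ₂ (Nat.add_sub_cancel' j.is_le) I
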